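/- Let p be a positive integer and q a nonzero integer. Then the quotient of G'_{p,q} by the normal closure of the element [x y, y x] (where x and y denote the images of the generators) is isomorphic to the group with presentation < x, y | ((yx)(xy)^{-1})^{pq} y = x^{-1} ((yx)(xy)^{-1})^{pq}, [x y, y x] = 1 >, via a map sending x to x and y to y. In particular, if p' is a positive integer and q' a nonzero integer with p q = p' q', then the quotients of G'_{p,q} and of G'_{p',q'} by the normal closures of their respective elements [x y, y x] are isomorphic. -/

import Mathlib

/-- The relators of the presentation
`< x, y | ((yx)^q (xy)^{-q})^p y = x⁻¹ ((yx)^q (xy)^{-q})^p,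
          ((yx)^{-q} (xy)^q)^p ((yx)^q (xy)^{-q})^p = 1 >`,
where `x` is the generator `0` and `y` is the generator `1`. -/
def gpqRels' (p q : ℤ) : Set (FreeGroup (Fin 2)) :=
  let x : FreeGroup (Fin 2) := FreeGroup.of 0
  let y : FreeGroup (Fin 2) := FreeGroup.of 1
  { ((y * x) ^ q * (x * y) ^ (-q)) ^ p * y *
      (x⁻¹ * ((y * x) ^ q * (x * y) ^ (-q)) ^ p)⁻¹,
    ((y * x) ^ (-q) * (x * y) ^ q) ^ p * ((y * x) ^ q * (x * y) ^ (-q)) ^ p }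

/-- `G'_{p,q}`, a presentation of the fundamental group of the 0-surgery along the
double twist knot `K_{p,q}`. -/
abbrev Gpq' (p q : ℤ) := PresentedGroup (gpqRels' p q)

/-- The commutator `[x y, y x] = (xy)⁻¹ (yx)⁻¹ (xy) (yx)` in `G'_{p,q}`. -/
def commXY (p q : ℤ) : Gpq' p q :=
  let x : Gpq' p q := PresentedGroup.of 0
  let y : Gpq' p q := PresentedGroup.of 1
  (x * y)⁻¹ * (y * x)⁻¹ * (x * y) * (y * x)

/-- The quotient of `G'_{p,q}` by the normal closure of `[x y, y x]`. -/
abbrev GpqQuot (p q : ℤ) := Gpq' p q ⧸ Subgroup.normalClosure {commXY p q}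

/-- The relators of the presentation
`< x, y | ((yx)(xy)⁻¹)^m y = x⁻¹ ((yx)(xy)⁻¹)^m, [x y, y x] = 1 >`,
where `x` is the generator `0` and `y` is the generator `1`. -/
def targetRels (m : ℤ) : Set (FreeGroup (Fin 2)) :=
  let x : FreeGroup (Fin 2) := FreeGroup.of 0
  let y : FreeGroup (Fin 2) := FreeGroup.of 1
  { ((y * x) * (x * y)⁻¹) ^ m * y * (x⁻¹ * ((y * x) * (x * y)⁻¹) ^ m)⁻¹,
    (x * y)⁻¹ * (y * x)⁻¹ * (x * y) * (y * x) }

/-- The group `< x, y | ((yx)(xy)⁻¹)^m y = x⁻¹ ((yx)(xy)⁻¹)^m, [x y, y x] = 1 >`. -/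
abbrev TargetGrp (m : ℤ) := PresentedGroup (targetRels m)

/-! In `G'_{p,q} / ⟨⟨[xy, yx]⟩⟩` the elements `a = xy` and `b = yx` commute, so
`(b^q a^{-q})^p = (b a⁻¹)^{pq}` and the second relator `(b^{-q} a^q)^p (b^q a^{-q})^p` becomes
trivial. Hence, once `[xy, yx] = 1` is imposed, the relators of `G'_{p,q}` are equivalent to
`((yx)(xy)⁻¹)^{pq} y = x⁻¹ ((yx)(xy)⁻¹)^{pq}`, which depends on `p` and `q` only through
`pq`. -/

section Commute

variable {G : Type*} [Group G] {a b : G}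

theorem inv_mul_inv_mul_mul_eq_one_iff_commute : a⁻¹ * b⁻¹ * a * b = 1 ↔ Commute a b := by
  rw [← Commute.inv_inv_iff, ← commutatorElement_eq_one_iff_commute, commutatorElement_def,
    inv_inv, inv_inv]

theorem Commute.zpow_mul_zpow_neg_zpow (h : Commute a b) (p q : ℤ) :
    (b ^ q * a ^ (-q)) ^ p = (b * a⁻¹) ^ (p * q) := by
  rw [mul_comm p q, zpow_mul, (h.symm.inv_right).mul_zpow, inv_zpow, zpow_neg]

theorem Commute.zpow_neg_mul_zpow_mul_zpow_mul_zpow_neg (h : Commute a b) (p q : ℤ) :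
    (b ^ (-q) * a ^ q) ^ p * (b ^ q * a ^ (-q)) ^ p = 1 := by
  have hinv : b ^ (-q) * a ^ q = (b ^ q * a ^ (-q))⁻¹ := by
    rw [mul_inv_rev, ← zpow_neg, neg_neg, ← zpow_neg, (h.zpow_zpow q (-q)).symm.eq]
  rw [hinv, inv_zpow, inv_mul_cancel]

end Commute

theorem forall_gpqRels'_iff_forall_targetRels {G : Type*} [Group G] (p q : ℤ) {f : Fin 2 → G}
    (hf : Commute (f 0 * f 1) (f 1 * f 0)) :
    (∀ r ∈ gpqRels' p q, FreeGroup.lift f r = 1) ↔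
      ∀ r ∈ targetRels (p * q), FreeGroup.lift f r = 1 := by
  simp only [gpqRels', targetRels, Set.forall_mem_insert, Set.mem_singleton_iff, forall_eq,
    map_mul, map_inv, map_zpow, FreeGroup.lift_apply_of]
  rw [hf.zpow_neg_mul_zpow_mul_zpow_mul_zpow_neg, hf.zpow_mul_zpow_neg_zpow,
    inv_mul_inv_mul_mul_eq_one_iff_commute.mpr hf]

theorem FreeGroup.lift_presentedGroup_of {α : Type*} (rels : Set (FreeGroup α)) :
    FreeGroup.lift (PresentedGroup.of (rels := rels)) = PresentedGroup.mk rels :=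
  FreeGroup.ext_hom _ _ fun _ => by simp [PresentedGroup.of]

theorem TargetGrp.commute_of_mul_of (m : ℤ) :
    Commute (PresentedGroup.of 0 * PresentedGroup.of 1 : TargetGrp m)
      (PresentedGroup.of 1 * PresentedGroup.of 0) := by
  have h := PresentedGroup.one_of_mem (rels := targetRels m) (Set.mem_insert_of_mem _ rfl)
  simp only [map_mul, map_inv] at h
  exact inv_mul_inv_mul_mul_eq_one_iff_commute.mp h

theorem GpqQuot.commute_mk_of_mul_mk_of (p q : ℤ) :
    Commute (QuotientGroup.mk (PresentedGroup.of 0) * QuotientGroup.mk (PresentedGroup.of 1) :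
        GpqQuot p q)
      (QuotientGroup.mk (PresentedGroup.of 1) * QuotientGroup.mk (PresentedGroup.of 0)) := by
  have h : (commXY p q : GpqQuot p q) = 1 :=
    (QuotientGroup.eq_one_iff _).mpr (Subgroup.subset_normalClosure rfl)
  simp only [commXY, QuotientGroup.mk_mul, QuotientGroup.mk_inv] at h
  exact inv_mul_inv_mul_mul_eq_one_iff_commute.mp h

theorem GpqQuot.lift_mk_of (p q : ℤ) :
    FreeGroup.lift (fun i => (QuotientGroup.mk (PresentedGroup.of i) : GpqQuot p q)) =
      (QuotientGroup.mk' _).comp (PresentedGroup.mk (gpqRels' p q)) :=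
  FreeGroup.ext_hom _ _ fun _ => by simp [PresentedGroup.of]

noncomputable section

variable (p q : ℤ)

def gpqToTarget : Gpq' p q →* TargetGrp (p * q) :=
  PresentedGroup.toGroup <|
    (forall_gpqRels'_iff_forall_targetRels p q (TargetGrp.commute_of_mul_of (p * q))).mpr
      fun r hr => by rw [FreeGroup.lift_presentedGroup_of]; exact PresentedGroup.one_of_mem hr

theorem gpqToTarget_commXY : gpqToTarget p q (commXY p q) = 1 := by
  simp only [commXY, gpqToTarget, map_mul, map_inv, PresentedGroup.toGroup.of]
  exact inv_mul_inv_mul_mul_eq_one_iff_commute.mpr (TargetGrp.commute_of_mul_of (p * q))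

def gpqQuotToTarget : GpqQuot p q →* TargetGrp (p * q) :=
  QuotientGroup.lift _ (gpqToTarget p q) <| Subgroup.normalClosure_le_normal <|
    Set.singleton_subset_iff.mpr (gpqToTarget_commXY p q)

def targetToGpqQuot : TargetGrp (p * q) →* GpqQuot p q :=
  PresentedGroup.toGroup <|
    (forall_gpqRels'_iff_forall_targetRels p q (GpqQuot.commute_mk_of_mul_mk_of p q)).mp
      fun r hr => by
        rw [GpqQuot.lift_mk_of, MonoidHom.comp_apply, PresentedGroup.one_of_mem hr, map_one]

theorem gpqQuotToTarget_mk_of (i : Fin 2) :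
    gpqQuotToTarget p q (QuotientGroup.mk (PresentedGroup.of i)) = PresentedGroup.of i :=
  (QuotientGroup.lift_mk _ _ _).trans (PresentedGroup.toGroup.of _)

theorem targetToGpqQuot_of (i : Fin 2) :
    targetToGpqQuot p q (PresentedGroup.of i) = QuotientGroup.mk (PresentedGroup.of i) :=
  PresentedGroup.toGroup.of _

def gpqQuotEquivTarget : GpqQuot p q ≃* TargetGrp (p * q) :=
  MonoidHom.toMulEquiv (gpqQuotToTarget p q) (targetToGpqQuot p q)
    (QuotientGroup.monoidHom_ext _ <| PresentedGroup.ext fun i => by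
      simp only [MonoidHom.comp_apply, MonoidHom.id_apply, QuotientGroup.mk'_apply,
        gpqQuotToTarget_mk_of, targetToGpqQuot_of])
    (PresentedGroup.ext fun i => by
      simp only [MonoidHom.comp_apply, MonoidHom.id_apply, targetToGpqQuot_of,
        gpqQuotToTarget_mk_of])

end

theorem quotient_presentation_general (p q : ℤ) :
    (∃ φ : GpqQuot p q ≃* TargetGrp (p * q),
        φ (QuotientGroup.mk (PresentedGroup.of 0)) = PresentedGroup.of 0 ∧
        φ (QuotientGroup.mk (PresentedGroup.of 1)) = PresentedGroup.of 1) ∧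
      ∀ p' q' : ℤ, 0 < p' → q' ≠ 0 → p * q = p' * q' →
        Nonempty (GpqQuot p q ≃* GpqQuot p' q') := by
  refine ⟨⟨gpqQuotEquivTarget p q, gpqQuotToTarget_mk_of p q 0, gpqQuotToTarget_mk_of p q 1⟩,
    ?_⟩
  intro p' q' _ _ hpq
  exact ⟨(gpqQuotEquivTarget p q).trans (hpq ▸ (gpqQuotEquivTarget p' q').symm)⟩

/-- for `p` positive and `q` nonzero, `G'_{p,q} / ⟨⟨[xy,yx]⟩⟩` is
isomorphic to `< x, y | ((yx)(xy)⁻¹)^{pq} y = x⁻¹ ((yx)(xy)⁻¹)^{pq}, [xy,yx] = 1 >`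
via `x ↦ x`, `y ↦ y`; in particular for `p'` positive and `q'` nonzero with
`pq = p'q'`, the corresponding quotients of `G'_{p,q}` and `G'_{p',q'}` are
isomorphic. -/
theorem quotient_presentation (p q : ℤ) (hp : 0 < p) (hq : q ≠ 0) :
    (∃ φ : GpqQuot p q ≃* TargetGrp (p * q),
        φ (QuotientGroup.mk (PresentedGroup.of 0)) = PresentedGroup.of 0 ∧
        φ (QuotientGroup.mk (PresentedGroup.of 1)) = PresentedGroup.of 1) ∧
      ∀ p' q' : ℤ, 0 < p' → q' ≠ 0 → p * q = p' * q' →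
        Nonempty (GpqQuot p q ≃* GpqQuot p' q') :=
  quotient_presentation_general p q
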